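/- arXiv:2502.02416 — 7 statements merged into one kernel-verified Lean document; each statement's English description precedes it below -/
import Mathlib

section
/- Let (Ω₁, μ₁) and (Ω₂, μ₂) be probability spaces, (A_i) and (B_i) sequences of measurable sets in Ω₁ and Ω₂ respectively. Suppose that for every k ∈ ℕ and all indices i₁, …, i_k ∈ ℕ we have μ₁(A_{i₁} ∩ ⋯ ∩ A_{i_k}) = μ₂(B_{i₁} ∩ ⋯ ∩ B_{i_k}). Then μ₁(limsup_i A_i) = μ₂(limsup_i B_i). -/
open MeasureTheory Filter

private lemma inter_cons_aux {Ω : Type*} (A : ℕ → Set Ω) (a : ℕ) {k : ℕ} (i : Fin (k+1) → ℕ) :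
    (⋂ j, A ((Fin.cons a i : Fin (k+2) → ℕ) j)) = A a ∩ ⋂ j, A (i j) := by
  ext x
  simp [Fin.forall_fin_succ]

private lemma meas_inter_union {Ω₁ Ω₂ : Type*} [MeasurableSpace Ω₁] [MeasurableSpace Ω₂]
    (μ₁ : Measure Ω₁) (μ₂ : Measure Ω₂)
    [IsProbabilityMeasure μ₁] [IsProbabilityMeasure μ₂]
    (A : ℕ → Set Ω₁) (B : ℕ → Set Ω₂)
    (hA : ∀ i, MeasurableSet (A i)) (hB : ∀ i, MeasurableSet (B i))
    (h : ∀ (k : ℕ) (i : Fin (k + 1) → ℕ), μ₁ (⋂ j, A (i j)) = μ₂ (⋂ j, B (i j)))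
    (s : Finset ℕ) :
    ∀ (k : ℕ) (i : Fin (k+1) → ℕ),
      μ₁ ((⋂ j, A (i j)) ∩ ⋃ l ∈ s, A l) = μ₂ ((⋂ j, B (i j)) ∩ ⋃ l ∈ s, B l) := by
  induction s using Finset.induction with
  | empty => simp
  | @insert a s ha ih =>
    intro k i
    rw [Finset.set_biUnion_insert, Finset.set_biUnion_insert,
      Set.inter_union_distrib_left, Set.inter_union_distrib_left]
    have mT1 : MeasurableSet (⋂ j, A (i j)) := MeasurableSet.iInter fun j => hA _
    have mT2 : MeasurableSet (⋂ j, B (i j)) := MeasurableSet.iInter fun j => hB _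
    have mU1 : MeasurableSet (⋃ l ∈ s, A l) :=
      MeasurableSet.biUnion s.countable_toSet (fun l _ => hA l)
    have mU2 : MeasurableSet (⋃ l ∈ s, B l) :=
      MeasurableSet.biUnion s.countable_toSet (fun l _ => hB l)
    have u1 := measure_union_add_inter ((⋂ j, A (i j)) ∩ A a) (mT1.inter mU1)
      (μ := μ₁) (t := (⋂ j, A (i j)) ∩ ⋃ l ∈ s, A l)
    have u2 := measure_union_add_inter ((⋂ j, B (i j)) ∩ B a) (mT2.inter mU2)
      (μ := μ₂) (t := (⋂ j, B (i j)) ∩ ⋃ l ∈ s, B l)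
    have e1 : μ₁ ((⋂ j, A (i j)) ∩ A a) = μ₂ ((⋂ j, B (i j)) ∩ B a) := by
      have := h (k+1) (Fin.cons a i)
      rwa [inter_cons_aux, inter_cons_aux, Set.inter_comm (A a), Set.inter_comm (B a)] at this
    have e2 : μ₁ ((⋂ j, A (i j)) ∩ ⋃ l ∈ s, A l) = μ₂ ((⋂ j, B (i j)) ∩ ⋃ l ∈ s, B l) := ih k i
    have e3 : μ₁ (((⋂ j, A (i j)) ∩ A a) ∩ ((⋂ j, A (i j)) ∩ ⋃ l ∈ s, A l))
        = μ₂ (((⋂ j, B (i j)) ∩ B a) ∩ ((⋂ j, B (i j)) ∩ ⋃ l ∈ s, B l)) := by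
      have := ih (k+1) (Fin.cons a i)
      rw [inter_cons_aux, inter_cons_aux] at this
      have eqA : ((⋂ j, A (i j)) ∩ A a) ∩ ((⋂ j, A (i j)) ∩ ⋃ l ∈ s, A l)
          = (A a ∩ ⋂ j, A (i j)) ∩ ⋃ l ∈ s, A l := by ext x; simp; tauto
      have eqB : ((⋂ j, B (i j)) ∩ B a) ∩ ((⋂ j, B (i j)) ∩ ⋃ l ∈ s, B l)
          = (B a ∩ ⋂ j, B (i j)) ∩ ⋃ l ∈ s, B l := by ext x; simp; tauto
      rw [eqA, eqB]; exact this
    have fin : μ₂ (((⋂ j, B (i j)) ∩ B a) ∩ ((⋂ j, B (i j)) ∩ ⋃ l ∈ s, B l)) ≠ ⊤ :=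
      measure_ne_top _ _
    have key : μ₁ (((⋂ j, A (i j)) ∩ A a) ∪ ((⋂ j, A (i j)) ∩ ⋃ l ∈ s, A l))
          + μ₁ (((⋂ j, A (i j)) ∩ A a) ∩ ((⋂ j, A (i j)) ∩ ⋃ l ∈ s, A l))
        = μ₂ (((⋂ j, B (i j)) ∩ B a) ∪ ((⋂ j, B (i j)) ∩ ⋃ l ∈ s, B l))
          + μ₂ (((⋂ j, B (i j)) ∩ B a) ∩ ((⋂ j, B (i j)) ∩ ⋃ l ∈ s, B l)) := by
      rw [u1, u2, e1, e2]
    rw [e3] at key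
    exact (ENNReal.add_left_inj fin).mp key

private lemma meas_union {Ω₁ Ω₂ : Type*} [MeasurableSpace Ω₁] [MeasurableSpace Ω₂]
    (μ₁ : Measure Ω₁) (μ₂ : Measure Ω₂)
    [IsProbabilityMeasure μ₁] [IsProbabilityMeasure μ₂]
    (A : ℕ → Set Ω₁) (B : ℕ → Set Ω₂)
    (hA : ∀ i, MeasurableSet (A i)) (hB : ∀ i, MeasurableSet (B i))
    (h : ∀ (k : ℕ) (i : Fin (k + 1) → ℕ), μ₁ (⋂ j, A (i j)) = μ₂ (⋂ j, B (i j)))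
    (s : Finset ℕ) :
    μ₁ (⋃ l ∈ s, A l) = μ₂ (⋃ l ∈ s, B l) := by
  induction s using Finset.induction with
  | empty => simp
  | @insert a s ha ih =>
    rw [Finset.set_biUnion_insert, Finset.set_biUnion_insert]
    have mU1 : MeasurableSet (⋃ l ∈ s, A l) :=
      MeasurableSet.biUnion s.countable_toSet (fun l _ => hA l)
    have mU2 : MeasurableSet (⋃ l ∈ s, B l) :=
      MeasurableSet.biUnion s.countable_toSet (fun l _ => hB l)
    have u1 := measure_union_add_inter (A a) mU1 (μ := μ₁) (t := ⋃ l ∈ s, A l)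
    have u2 := measure_union_add_inter (B a) mU2 (μ := μ₂) (t := ⋃ l ∈ s, B l)
    have e1 : μ₁ (A a) = μ₂ (B a) := by
      have := h 0 (fun _ => a)
      simpa [Set.iInter_const] using this
    have e3 : μ₁ (A a ∩ ⋃ l ∈ s, A l) = μ₂ (B a ∩ ⋃ l ∈ s, B l) := by
      have := meas_inter_union μ₁ μ₂ A B hA hB h s 0 (fun _ => a)
      simpa [Set.iInter_const] using this
    have fin : μ₂ (B a ∩ ⋃ l ∈ s, B l) ≠ ⊤ := measure_ne_top _ _
    have key : μ₁ (A a ∪ ⋃ l ∈ s, A l) + μ₁ (A a ∩ ⋃ l ∈ s, A l)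
        = μ₂ (B a ∪ ⋃ l ∈ s, B l) + μ₂ (B a ∩ ⋃ l ∈ s, B l) := by
      rw [u1, u2, e1, ih]
    rw [e3] at key
    exact (ENNReal.add_left_inj fin).mp key

theorem stmt_0 {Ω₁ Ω₂ : Type*} [MeasurableSpace Ω₁] [MeasurableSpace Ω₂]
    (μ₁ : Measure Ω₁) (μ₂ : Measure Ω₂)
    [IsProbabilityMeasure μ₁] [IsProbabilityMeasure μ₂]
    (A : ℕ → Set Ω₁) (B : ℕ → Set Ω₂)
    (hA : ∀ i, MeasurableSet (A i)) (hB : ∀ i, MeasurableSet (B i))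
    (h : ∀ (k : ℕ) (i : Fin (k + 1) → ℕ),
      μ₁ (⋂ j, A (i j)) = μ₂ (⋂ j, B (i j))) :
    μ₁ (limsup A atTop) = μ₂ (limsup B atTop) := by
  have tail : ∀ n, μ₁ (⋃ i, ⋃ _ : n ≤ i, A i) = μ₂ (⋃ i, ⋃ _ : n ≤ i, B i) := by
    intro n
    have hAeq : (⋃ i, ⋃ _ : n ≤ i, A i) = ⋃ m, ⋃ l ∈ Finset.Ico n (n + m), A l := by
      ext x; simp only [Set.mem_iUnion, Finset.mem_Ico]
      constructor
      · rintro ⟨i, hi, hx⟩; exact ⟨i + 1, i, ⟨hi, by omega⟩, hx⟩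
      · rintro ⟨m, i, ⟨hi, _⟩, hx⟩; exact ⟨i, hi, hx⟩
    have hBeq : (⋃ i, ⋃ _ : n ≤ i, B i) = ⋃ m, ⋃ l ∈ Finset.Ico n (n + m), B l := by
      ext x; simp only [Set.mem_iUnion, Finset.mem_Ico]
      constructor
      · rintro ⟨i, hi, hx⟩; exact ⟨i + 1, i, ⟨hi, by omega⟩, hx⟩
      · rintro ⟨m, i, ⟨hi, _⟩, hx⟩; exact ⟨i, hi, hx⟩
    have monA : Monotone (fun m => ⋃ l ∈ Finset.Ico n (n + m), A l) := by
      intro m₁ m₂ hm x hx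
      simp only [Set.mem_iUnion, Finset.mem_Ico] at hx ⊢
      obtain ⟨l, ⟨h1, h2⟩, hx⟩ := hx
      exact ⟨l, ⟨h1, by omega⟩, hx⟩
    have monB : Monotone (fun m => ⋃ l ∈ Finset.Ico n (n + m), B l) := by
      intro m₁ m₂ hm x hx
      simp only [Set.mem_iUnion, Finset.mem_Ico] at hx ⊢
      obtain ⟨l, ⟨h1, h2⟩, hx⟩ := hx
      exact ⟨l, ⟨h1, by omega⟩, hx⟩
    rw [hAeq, hBeq, monA.measure_iUnion, monB.measure_iUnion]
    exact iSup_congr fun m => meas_union μ₁ μ₂ A B hA hB h _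
  have hlsA : limsup A atTop = ⋂ n, ⋃ i, ⋃ _ : n ≤ i, A i := by
    rw [limsup_eq_iInf_iSup_of_nat]
    simp only [Set.iSup_eq_iUnion, Set.iInf_eq_iInter]
  have hlsB : limsup B atTop = ⋂ n, ⋃ i, ⋃ _ : n ≤ i, B i := by
    rw [limsup_eq_iInf_iSup_of_nat]
    simp only [Set.iSup_eq_iUnion, Set.iInf_eq_iInter]
  have antA : Antitone (fun n => ⋃ i, ⋃ _ : n ≤ i, A i) := by
    intro n₁ n₂ hn
    dsimp only
    exact Set.iUnion₂_subset fun i hi =>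
      Set.subset_iUnion₂ (s := fun i (_ : n₁ ≤ i) => A i) i (hn.trans hi)
  have antB : Antitone (fun n => ⋃ i, ⋃ _ : n ≤ i, B i) := by
    intro n₁ n₂ hn
    dsimp only
    exact Set.iUnion₂_subset fun i hi =>
      Set.subset_iUnion₂ (s := fun i (_ : n₁ ≤ i) => B i) i (hn.trans hi)
  rw [hlsA, hlsB,
    antA.measure_iInter (fun n => (MeasurableSet.biUnion (Set.to_countable _)
      (fun i _ => hA i)).nullMeasurableSet) ⟨0, measure_ne_top _ _⟩,
    antB.measure_iInter (fun n => (MeasurableSet.biUnion (Set.to_countable _)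
      (fun i _ => hB i)).nullMeasurableSet) ⟨0, measure_ne_top _ _⟩]
  exact iInf_congr tail
end

section
/- Let (Ω₁, μ₁) and (Ω₂, μ₂) be probability spaces, (A_i) and (B_i) sequences of measurable sets in Ω₁ and Ω₂ respectively. Suppose that for every k ∈ ℕ and all indices i₁, …, i_k: if k is odd then μ₁(A_{i₁} ∩ ⋯ ∩ A_{i_k}) ≥ μ₂(B_{i₁} ∩ ⋯ ∩ B_{i_k}), and if k is even then μ₁(A_{i₁} ∩ ⋯ ∩ A_{i_k}) ≤ μ₂(B_{i₁} ∩ ⋯ ∩ B_{i_k}). Then μ₁(limsup_i A_i) ≥ μ₂(limsup_i B_i). -/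
open MeasureTheory Filter

private lemma iInter_cons_eq {Ω : Type*} (A : ℕ → Set Ω) (a : ℕ) {k : ℕ} (i : Fin (k+1) → ℕ) :
    (⋂ j : Fin (k+2), A ((Fin.cons a i : Fin (k+2) → ℕ) j)) = A a ∩ ⋂ j, A (i j) := by
  ext x
  simp [Set.mem_iInter, Fin.forall_fin_succ]

private lemma flipOdd {Ω₁ Ω₂ : Type*} [MeasurableSpace Ω₁] [MeasurableSpace Ω₂]
    (μ₁ : Measure Ω₁) (μ₂ : Measure Ω₂) (A : ℕ → Set Ω₁) (B : ℕ → Set Ω₂) (a : ℕ)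
    (heven : ∀ (k : ℕ) (i : Fin (k + 1) → ℕ), Even (k + 1) →
      μ₁ (⋂ j, A (i j)) ≤ μ₂ (⋂ j, B (i j))) :
    ∀ (k : ℕ) (i : Fin (k + 1) → ℕ), Odd (k + 1) →
      μ₁ (⋂ j, A a ∩ A (i j)) ≤ μ₂ (⋂ j, B a ∩ B (i j)) := by
  intro k i hk
  rw [← Set.inter_iInter, ← Set.inter_iInter,
    ← iInter_cons_eq A a i, ← iInter_cons_eq B a i]
  exact heven (k + 1) (Fin.cons a i) (by
    rcases hk with ⟨m, hm⟩
    exact ⟨m + 1, by omega⟩)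

private lemma flipEven {Ω₁ Ω₂ : Type*} [MeasurableSpace Ω₁] [MeasurableSpace Ω₂]
    (μ₁ : Measure Ω₁) (μ₂ : Measure Ω₂) (A : ℕ → Set Ω₁) (B : ℕ → Set Ω₂) (a : ℕ)
    (hodd : ∀ (k : ℕ) (i : Fin (k + 1) → ℕ), Odd (k + 1) →
      μ₂ (⋂ j, B (i j)) ≤ μ₁ (⋂ j, A (i j))) :
    ∀ (k : ℕ) (i : Fin (k + 1) → ℕ), Even (k + 1) →
      μ₂ (⋂ j, B a ∩ B (i j)) ≤ μ₁ (⋂ j, A a ∩ A (i j)) := by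
  intro k i hk
  rw [← Set.inter_iInter, ← Set.inter_iInter,
    ← iInter_cons_eq A a i, ← iInter_cons_eq B a i]
  exact hodd (k + 1) (Fin.cons a i) (by
    rcases hk with ⟨m, hm⟩
    exact ⟨m, by omega⟩)

private lemma step {Ω₁ Ω₂ : Type*} [MeasurableSpace Ω₁] [MeasurableSpace Ω₂]
    (μ₁ : Measure Ω₁) (μ₂ : Measure Ω₂) [IsFiniteMeasure μ₂]
    (A : ℕ → Set Ω₁) (B : ℕ → Set Ω₂)
    (hA : ∀ i, MeasurableSet (A i)) (hB : ∀ i, MeasurableSet (B i))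
    (a : ℕ) (S' : Finset ℕ)
    (h1 : μ₂ (B a) ≤ μ₁ (A a))
    (h2 : μ₂ (⋃ i ∈ S', B i) ≤ μ₁ (⋃ i ∈ S', A i))
    (h3 : μ₁ (⋃ i ∈ S', (A a ∩ A i)) ≤ μ₂ (⋃ i ∈ S', (B a ∩ B i))) :
    μ₂ (⋃ i ∈ insert a S', B i) ≤ μ₁ (⋃ i ∈ insert a S', A i) := by
  have hU₁ : MeasurableSet (⋃ i ∈ S', A i) := S'.measurableSet_biUnion (fun i _ => hA i)
  have hU₂ : MeasurableSet (⋃ i ∈ S', B i) := S'.measurableSet_biUnion (fun i _ => hB i)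
  have e1 : μ₁ (A a ∪ ⋃ i ∈ S', A i) + μ₁ (A a ∩ ⋃ i ∈ S', A i)
      = μ₁ (A a) + μ₁ (⋃ i ∈ S', A i) := measure_union_add_inter _ hU₁
  have e2 : μ₂ (B a ∪ ⋃ i ∈ S', B i) + μ₂ (B a ∩ ⋃ i ∈ S', B i)
      = μ₂ (B a) + μ₂ (⋃ i ∈ S', B i) := measure_union_add_inter _ hU₂
  have h4 : μ₁ (A a ∩ ⋃ i ∈ S', A i) ≤ μ₂ (B a ∩ ⋃ i ∈ S', B i) := by
    rw [Set.inter_iUnion₂, Set.inter_iUnion₂]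
    exact h3
  have key : μ₂ (B a ∪ ⋃ i ∈ S', B i) ≤ μ₁ (A a ∪ ⋃ i ∈ S', A i) := by
    have hfinI : μ₂ (B a ∩ ⋃ i ∈ S', B i) ≠ ⊤ := measure_ne_top μ₂ _
    rw [← ENNReal.add_le_add_iff_right hfinI]
    calc μ₂ (B a ∪ ⋃ i ∈ S', B i) + μ₂ (B a ∩ ⋃ i ∈ S', B i)
        = μ₂ (B a) + μ₂ (⋃ i ∈ S', B i) := e2
      _ ≤ μ₁ (A a) + μ₁ (⋃ i ∈ S', A i) := add_le_add h1 h2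
      _ = μ₁ (A a ∪ ⋃ i ∈ S', A i) + μ₁ (A a ∩ ⋃ i ∈ S', A i) := e1.symm
      _ ≤ μ₁ (A a ∪ ⋃ i ∈ S', A i) + μ₂ (B a ∩ ⋃ i ∈ S', B i) := add_le_add le_rfl h4
  rw [Finset.set_biUnion_insert, Finset.set_biUnion_insert]
  exact key

private lemma aux : ∀ (n : ℕ) {Ω₁ Ω₂ : Type*} [MeasurableSpace Ω₁] [MeasurableSpace Ω₂]
    (μ₁ : Measure Ω₁) (μ₂ : Measure Ω₂), IsFiniteMeasure μ₁ → IsFiniteMeasure μ₂ →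
    ∀ (A : ℕ → Set Ω₁) (B : ℕ → Set Ω₂),
    (∀ i, MeasurableSet (A i)) → (∀ i, MeasurableSet (B i)) →
    (((∀ (k : ℕ) (i : Fin (k + 1) → ℕ), Odd (k + 1) →
        μ₂ (⋂ j, B (i j)) ≤ μ₁ (⋂ j, A (i j))) →
      (∀ (k : ℕ) (i : Fin (k + 1) → ℕ), Even (k + 1) →
        μ₁ (⋂ j, A (i j)) ≤ μ₂ (⋂ j, B (i j))) →
      ∀ (S : Finset ℕ), S.card ≤ n → μ₂ (⋃ i ∈ S, B i) ≤ μ₁ (⋃ i ∈ S, A i)) ∧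
     ((∀ (k : ℕ) (i : Fin (k + 1) → ℕ), Odd (k + 1) →
        μ₁ (⋂ j, A (i j)) ≤ μ₂ (⋂ j, B (i j))) →
      (∀ (k : ℕ) (i : Fin (k + 1) → ℕ), Even (k + 1) →
        μ₂ (⋂ j, B (i j)) ≤ μ₁ (⋂ j, A (i j))) →
      ∀ (S : Finset ℕ), S.card ≤ n → μ₁ (⋃ i ∈ S, A i) ≤ μ₂ (⋃ i ∈ S, B i))) := by
  intro n
  induction n with
  | zero =>
    intro Ω₁ Ω₂ _ _ μ₁ μ₂ _ _ A B hA hB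
    constructor <;>
    · intro _ _ S hS
      rw [Nat.le_zero, Finset.card_eq_zero] at hS
      subst hS
      simp
  | succ n ih =>
    intro Ω₁ Ω₂ _ _ μ₁ μ₂ hfin₁ hfin₂ A B hA hB
    constructor
    · intro hodd heven S hS
      rcases S.eq_empty_or_nonempty with rfl | ⟨a, ha⟩
      · simp
      · have hins : S = insert a (S.erase a) := (Finset.insert_erase ha).symm
        have hcard : (S.erase a).card ≤ n := by
          have hlt := Finset.card_erase_lt_of_mem ha
          omega
        have h1 : μ₂ (B a) ≤ μ₁ (A a) := by
          have := hodd 0 (fun _ => a) (by decide)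
          simpa [Set.iInter_const] using this
        have h2 : μ₂ (⋃ i ∈ S.erase a, B i) ≤ μ₁ (⋃ i ∈ S.erase a, A i) :=
          (ih μ₁ μ₂ hfin₁ hfin₂ A B hA hB).1 hodd heven _ hcard
        have h3 : μ₁ (⋃ i ∈ S.erase a, (A a ∩ A i)) ≤ μ₂ (⋃ i ∈ S.erase a, (B a ∩ B i)) :=
          (ih μ₁ μ₂ hfin₁ hfin₂ (fun i => A a ∩ A i) (fun i => B a ∩ B i)
            (fun i => (hA a).inter (hA i)) (fun i => (hB a).inter (hB i))).2
            (flipOdd μ₁ μ₂ A B a heven) (flipEven μ₁ μ₂ A B a hodd) _ hcard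
        rw [hins]
        exact step μ₁ μ₂ A B hA hB a (S.erase a) h1 h2 h3
    · intro hodd heven S hS
      rcases S.eq_empty_or_nonempty with rfl | ⟨a, ha⟩
      · simp
      · have hins : S = insert a (S.erase a) := (Finset.insert_erase ha).symm
        have hcard : (S.erase a).card ≤ n := by
          have hlt := Finset.card_erase_lt_of_mem ha
          omega
        have h1 : μ₁ (A a) ≤ μ₂ (B a) := by
          have := hodd 0 (fun _ => a) (by decide)
          simpa [Set.iInter_const] using this
        have h2 : μ₁ (⋃ i ∈ S.erase a, A i) ≤ μ₂ (⋃ i ∈ S.erase a, B i) :=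
          (ih μ₁ μ₂ hfin₁ hfin₂ A B hA hB).2 hodd heven _ hcard
        have h3 : μ₂ (⋃ i ∈ S.erase a, (B a ∩ B i)) ≤ μ₁ (⋃ i ∈ S.erase a, (A a ∩ A i)) :=
          (ih μ₁ μ₂ hfin₁ hfin₂ (fun i => A a ∩ A i) (fun i => B a ∩ B i)
            (fun i => (hA a).inter (hA i)) (fun i => (hB a).inter (hB i))).1
            (flipOdd μ₂ μ₁ B A a heven) (flipEven μ₂ μ₁ B A a hodd) _ hcard
        rw [hins]
        exact step μ₂ μ₁ B A hB hA a (S.erase a) h1 h2 h3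

private lemma union_tail_eq {Ω : Type*} (C : ℕ → Set Ω) (n : ℕ) :
    (⋃ i, ⋃ (_ : n ≤ i), C i) = ⋃ m, ⋃ i ∈ Finset.Icc n m, C i := by
  ext x
  simp only [Set.mem_iUnion, Finset.mem_Icc]
  constructor
  · rintro ⟨i, hi, hx⟩
    exact ⟨i, i, ⟨hi, le_rfl⟩, hx⟩
  · rintro ⟨m, i, ⟨hi, _⟩, hx⟩
    exact ⟨i, hi, hx⟩

private lemma measure_tail_le {Ω₁ Ω₂ : Type*} [MeasurableSpace Ω₁] [MeasurableSpace Ω₂]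
    (μ₁ : Measure Ω₁) (μ₂ : Measure Ω₂)
    [IsFiniteMeasure μ₁] [IsFiniteMeasure μ₂]
    (A : ℕ → Set Ω₁) (B : ℕ → Set Ω₂)
    (hA : ∀ i, MeasurableSet (A i)) (hB : ∀ i, MeasurableSet (B i))
    (hodd : ∀ (k : ℕ) (i : Fin (k + 1) → ℕ), Odd (k + 1) →
      μ₂ (⋂ j, B (i j)) ≤ μ₁ (⋂ j, A (i j)))
    (heven : ∀ (k : ℕ) (i : Fin (k + 1) → ℕ), Even (k + 1) →
      μ₁ (⋂ j, A (i j)) ≤ μ₂ (⋂ j, B (i j)))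
    (n : ℕ) :
    μ₂ (⋃ i, ⋃ (_ : n ≤ i), B i) ≤ μ₁ (⋃ i, ⋃ (_ : n ≤ i), A i) := by
  rw [union_tail_eq A n, union_tail_eq B n]
  have hmono₁ : Monotone (fun m => ⋃ i ∈ Finset.Icc n m, A i) := by
    intro m m' hm
    exact Set.biUnion_subset_biUnion_left (Finset.Icc_subset_Icc le_rfl hm)
  have hmono₂ : Monotone (fun m => ⋃ i ∈ Finset.Icc n m, B i) := by
    intro m m' hm
    exact Set.biUnion_subset_biUnion_left (Finset.Icc_subset_Icc le_rfl hm)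
  rw [hmono₁.measure_iUnion, hmono₂.measure_iUnion]
  exact iSup_mono fun m =>
    (aux (Finset.Icc n m).card μ₁ μ₂ inferInstance inferInstance A B hA hB).1
      hodd heven _ le_rfl

theorem stmt_1 {Ω₁ Ω₂ : Type*} [MeasurableSpace Ω₁] [MeasurableSpace Ω₂]
    (μ₁ : Measure Ω₁) (μ₂ : Measure Ω₂)
    [IsProbabilityMeasure μ₁] [IsProbabilityMeasure μ₂]
    (A : ℕ → Set Ω₁) (B : ℕ → Set Ω₂)
    (hA : ∀ i, MeasurableSet (A i)) (hB : ∀ i, MeasurableSet (B i))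
    (hodd : ∀ (k : ℕ) (i : Fin (k + 1) → ℕ), Odd (k + 1) →
      μ₂ (⋂ j, B (i j)) ≤ μ₁ (⋂ j, A (i j)))
    (heven : ∀ (k : ℕ) (i : Fin (k + 1) → ℕ), Even (k + 1) →
      μ₁ (⋂ j, A (i j)) ≤ μ₂ (⋂ j, B (i j))) :
    μ₂ (limsup B atTop) ≤ μ₁ (limsup A atTop) := by
  have hlsA : limsup A atTop = ⋂ n, ⋃ i, ⋃ (_ : n ≤ i), A i := by
    rw [limsup_eq_iInf_iSup_of_nat]
    simp only [Set.iInf_eq_iInter, Set.iSup_eq_iUnion]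
  have hlsB : limsup B atTop = ⋂ n, ⋃ i, ⋃ (_ : n ≤ i), B i := by
    rw [limsup_eq_iInf_iSup_of_nat]
    simp only [Set.iInf_eq_iInter, Set.iSup_eq_iUnion]
  have hAnt : Antitone (fun n => ⋃ i, ⋃ (_ : n ≤ i), A i) := by
    intro n m hnm
    exact Set.biUnion_subset_biUnion_left fun i hi => le_trans hnm hi
  have heq : μ₁ (limsup A atTop) = ⨅ n, μ₁ (⋃ i, ⋃ (_ : n ≤ i), A i) := by
    rw [hlsA]
    refine Directed.measure_iInter
      (fun n => (MeasurableSet.biUnion (Set.to_countable _)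
        (fun i _ => hA i)).nullMeasurableSet)
      hAnt.directed_ge ⟨0, measure_ne_top _ _⟩
  have hle : μ₂ (limsup B atTop) ≤ ⨅ n, μ₂ (⋃ i, ⋃ (_ : n ≤ i), B i) := by
    rw [hlsB]
    exact le_iInf fun n => measure_mono (Set.iInter_subset _ n)
  calc μ₂ (limsup B atTop) ≤ ⨅ n, μ₂ (⋃ i, ⋃ (_ : n ≤ i), B i) := hle
    _ ≤ ⨅ n, μ₁ (⋃ i, ⋃ (_ : n ≤ i), A i) :=
      iInf_mono fun n => measure_tail_le μ₁ μ₂ A B hA hB hodd heven n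
    _ = μ₁ (limsup A atTop) := heq.symm
end

section
/- Let μ be Lebesgue measure on [0,1] and let p, q ∈ ℕ with p ≤ q. There exists a sequence (G_n)_{n∈ℕ} of Borel subsets of [0,1] such that: (i) μ(G_i) = p/(q·i) for all i; (ii) for every finite strictly increasing sequence i₁ < i₂ < ⋯ < i_n of naturals, μ(G_{i₁} ∩ G_{i₂} ∩ ⋯ ∩ G_{i_n}) = p^n/(q^n · i_n); and (iii) μ(limsup_{n→∞} G_n) = 0. -/
/-!
Level `n` consists of `q ^ n` half-open cells of length `1 / (n q ^ n)`, of total measure `1 / n`.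
Each cell of level `n + 1` is one of `q` adjacent subintervals at the left end of a cell of level
`n`; they fit because `q / ((n + 1) q ^ (n + 1)) ≤ 1 / (n q ^ n)`. Indexing the cells of level `N`
by `m < q ^ N`, the ancestor of cell `m` at level `n` is cell `m / q ^ (N - n)`, and distinct cells
of one level are disjoint. `G n` consists of the cells of level `n` whose last base-`q` digit is
`< p`, so for `i₁ < ⋯ < i_k = N` the set `⋂ G (i j)` is the union of the cells `m` of level `N`
whose digits at the positions `N - i j` are all `< p`: `p ^ k q ^ (N - k)` cells, of total measure
`p ^ k / (q ^ k N)`. Finally `limsup G` lies in the union of the cells of every level `n`, which has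
measure `1 / n`.
-/

open MeasureTheory Filter Finset
open scoped ENNReal

namespace NestedCells

lemma card_filter_range_eq_card_filter_fin (n : ℕ) (P : ℕ → Prop) [DecidablePred P] :
    #{m ∈ range n | P m} = #{a : Fin n | P a} := by
  rw [← Nat.Iio_eq_range, ← Fin.map_valEmbedding_univ, filter_map, card_map]
  rfl

lemma card_filter_digit_lt {p q N : ℕ} (hpq : p ≤ q) {K : Finset ℕ} (hK : K ⊆ range N) :
    #{m ∈ range (q ^ N) | ∀ k ∈ K, m / q ^ k % q < p} = p ^ #K * q ^ (N - #K) := by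
  -- the digits `m / q ^ k % q` of `m` are the coordinates of `finFunctionFinEquiv.symm m`
  let S : Fin N → Finset (Fin q) := fun k =>
    if (k : ℕ) ∈ K then ({d | (d : ℕ) < p} : Finset (Fin q)) else univ
  have hS : ∀ k, #(S k) = if (k : ℕ) ∈ K then p else q := by
    intro k
    split_ifs with hk <;> simp [S, hk, Fin.card_filter_val_lt, hpq]
  rw [card_filter_range_eq_card_filter_fin,
    card_equiv finFunctionFinEquiv.symm (t := Fintype.piFinset S)]
  · simp_rw [Fintype.card_piFinset, hS]
    rw [Fin.prod_univ_eq_prod_range (fun k => if k ∈ K then p else q), prod_ite, prod_const,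
      prod_const, filter_mem_eq_inter, inter_eq_right.2 hK, filter_notMem_eq_sdiff,
      card_sdiff_of_subset hK, card_range]
  · intro a
    simp only [mem_filter, mem_univ, true_and, Fintype.mem_piFinset, S]
    constructor
    · intro h k
      split_ifs with hk
      · simpa using h k hk
      · exact mem_univ _
    · intro h k hk
      simpa [hk] using h ⟨k, mem_range.1 (hK hk)⟩

lemma div_pow_sub_lt_pow {q n N m : ℕ} (h : n ≤ N) (hm : m < q ^ N) : m / q ^ (N - n) < q ^ n :=
  Nat.div_lt_of_lt_mul (by rwa [← pow_add, Nat.sub_add_cancel h])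

lemma disjoint_Ico_add_mul {α : Type*} [Ring α] [LinearOrder α] [IsOrderedRing α] {a h : α}
    {s t : ℕ} (hst : s ≠ t) :
    Disjoint (Set.Ico (a + s * h) (a + s * h + h)) (Set.Ico (a + t * h) (a + t * h + h)) := by
  simpa only [Function.onFun, add_zsmul, one_zsmul, natCast_zsmul, nsmul_eq_mul, add_assoc] using
    Set.pairwise_disjoint_Ico_add_zsmul a h (show (s : ℤ) ≠ t by exact_mod_cast hst)

-- `cellLength q 0 = 0⁻¹ = 0`: the cells of level `0` are empty.
noncomputable def cellLength (q n : ℕ) : ℝ := ((n : ℝ) * q ^ n)⁻¹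

-- `cell q (n + 1) m` is the `(m % q)`-th of `q` adjacent intervals of length
-- `cellLength q (n + 1)` starting at the left end of its parent `cell q n (m / q)`.
noncomputable def cellLeft (q : ℕ) : ℕ → ℕ → ℝ
  | 0, _ => 0
  | n + 1, m => cellLeft q n (m / q) + (m % q : ℕ) * cellLength q (n + 1)

def cell (q n m : ℕ) : Set ℝ := Set.Ico (cellLeft q n m) (cellLeft q n m + cellLength q n)

def periodicCells (p q n : ℕ) : Set ℝ := ⋃ m ∈ {m ∈ range (q ^ n) | m % q < p}, cell q n m

variable {p q : ℕ}

lemma cellLength_nonneg (q n : ℕ) : 0 ≤ cellLength q n := by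
  unfold cellLength; positivity

lemma mul_cellLength_succ_le (hq : 0 < q) {n : ℕ} (hn : 1 ≤ n) :
    q * cellLength q (n + 1) ≤ cellLength q n := by
  have hq' : (0 : ℝ) < q := by exact_mod_cast hq
  have hn' : (1 : ℝ) ≤ n := by exact_mod_cast hn
  calc (q : ℝ) * cellLength q (n + 1) = (((n : ℝ) + 1) * q ^ n)⁻¹ := by
        unfold cellLength; push_cast; field_simp; ring
    _ ≤ cellLength q n := by unfold cellLength; gcongr; linarith

lemma cell_succ_subset (hq : 0 < q) {n : ℕ} (hn : 1 ≤ n) (m : ℕ) :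
    cell q (n + 1) m ⊆ cell q n (m / q) := by
  have hdigit : ((m % q : ℕ) : ℝ) + 1 ≤ q := by exact_mod_cast Nat.mod_lt m hq
  have hL := cellLength_nonneg q (n + 1)
  have hfit := mul_cellLength_succ_le hq hn
  rintro x ⟨hx₁, hx₂⟩
  simp only [cell, cellLeft] at hx₁ hx₂ ⊢
  constructor <;> nlinarith

lemma cell_subset_cell_div_pow (hq : 0 < q) {n N : ℕ} (hn : 1 ≤ n) (h : n ≤ N) (m : ℕ) :
    cell q N m ⊆ cell q n (m / q ^ (N - n)) := by
  induction N, h using Nat.le_induction generalizing m with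
  | base => simp
  | succ N hnN ih =>
    rw [Nat.sub_add_comm hnN, pow_succ', ← Nat.div_div_eq_div_mul]
    exact (cell_succ_subset hq (hn.trans hnN) m).trans (ih _)

lemma cell_subset_Icc (hq : 0 < q) (n m : ℕ) : cell q n m ⊆ Set.Icc 0 1 := by
  rcases Nat.eq_zero_or_pos n with rfl | hn
  · simp [cell, cellLength]
  refine (cell_subset_cell_div_pow hq le_rfl hn m).trans ?_
  have hdigit : ((m / q ^ (n - 1) % q : ℕ) : ℝ) + 1 ≤ q := by exact_mod_cast Nat.mod_lt _ hq
  have hq' : (0 : ℝ) < q := by exact_mod_cast hq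
  rintro x ⟨hx₁, hx₂⟩
  simp only [cellLeft, cellLength, Nat.cast_one, pow_one, one_mul, zero_add] at hx₁ hx₂
  refine ⟨le_trans (by positivity) hx₁, hx₂.le.trans ?_⟩
  rw [← add_one_mul, ← div_eq_mul_inv, div_le_one hq']
  exact hdigit

lemma disjoint_cell (hq : 0 < q) {n m₁ m₂ : ℕ} (h₁ : m₁ < q ^ n) (h₂ : m₂ < q ^ n)
    (hne : m₁ ≠ m₂) : Disjoint (cell q n m₁) (cell q n m₂) := by
  induction n generalizing m₁ m₂ with
  | zero =>
    simp only [pow_zero, Nat.lt_one_iff] at h₁ h₂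
    exact absurd (h₁.trans h₂.symm) hne
  | succ n ih =>
    have hpar₁ : m₁ / q < q ^ n := Nat.div_lt_of_lt_mul (by rwa [← pow_succ'])
    have hpar₂ : m₂ / q < q ^ n := Nat.div_lt_of_lt_mul (by rwa [← pow_succ'])
    by_cases hpar : m₁ / q = m₂ / q
    · have hdigit : m₁ % q ≠ m₂ % q := fun h =>
        hne (by rw [← Nat.mod_add_div m₁ q, ← Nat.mod_add_div m₂ q, h, hpar])
      simp only [cell, cellLeft, hpar]
      exact disjoint_Ico_add_mul hdigit
    · rcases Nat.eq_zero_or_pos n with rfl | hn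
      · simp only [pow_zero, Nat.lt_one_iff] at hpar₁ hpar₂
        exact absurd (hpar₁.trans hpar₂.symm) hpar
      exact (ih hpar₁ hpar₂ hpar).mono (cell_succ_subset hq hn m₁) (cell_succ_subset hq hn m₂)

lemma volume_cell (hq : 0 < q) {n : ℕ} (hn : 1 ≤ n) (m : ℕ) :
    volume (cell q n m) = ((n : ℝ≥0∞) * q ^ n)⁻¹ := by
  have : (0 : ℝ) < n * q ^ n := by positivity
  rw [cell, Real.volume_Ico, add_sub_cancel_left, cellLength, ENNReal.ofReal_inv_of_pos this]
  norm_cast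

lemma volume_biUnion_cell (hq : 0 < q) {n : ℕ} (hn : 1 ≤ n) {T : Finset ℕ}
    (hT : T ⊆ range (q ^ n)) : volume (⋃ m ∈ T, cell q n m) = #T / (n * q ^ n) := by
  rw [measure_biUnion_finset, sum_congr rfl fun m _ => volume_cell hq hn m, sum_const,
    nsmul_eq_mul, div_eq_mul_inv]
  · exact fun m₁ h₁ m₂ h₂ hne => disjoint_cell hq (mem_range.1 (hT h₁)) (mem_range.1 (hT h₂)) hne
  · exact fun _ _ => measurableSet_Ico

lemma measurableSet_periodicCells (p q n : ℕ) : MeasurableSet (periodicCells p q n) :=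
  Finset.measurableSet_biUnion _ fun _ _ => measurableSet_Ico

lemma periodicCells_subset_Icc (hq : 0 < q) (n : ℕ) : periodicCells p q n ⊆ Set.Icc 0 1 :=
  Set.iUnion₂_subset fun m _ => cell_subset_Icc hq n m

lemma periodicCells_subset_biUnion_cell (hq : 0 < q) {n k : ℕ} (hn : 1 ≤ n) (h : n ≤ k) :
    periodicCells p q k ⊆ ⋃ m ∈ range (q ^ n), cell q n m :=
  Set.iUnion₂_subset fun m hm => (cell_subset_cell_div_pow hq hn h m).trans <|
    Finset.subset_set_biUnion_of_mem
      (mem_range.2 (div_pow_sub_lt_pow h (mem_range.1 (mem_filter.1 hm).1)))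

lemma mem_periodicCells_iff (hq : 0 < q) {n N m : ℕ} {x : ℝ} (hn : 1 ≤ n) (h : n ≤ N)
    (hm : m < q ^ N) (hx : x ∈ cell q N m) :
    x ∈ periodicCells p q n ↔ m / q ^ (N - n) % q < p := by
  have hxa := cell_subset_cell_div_pow hq hn h m hx
  have ha := div_pow_sub_lt_pow h hm
  simp only [periodicCells, Set.mem_iUnion, mem_filter, mem_range, exists_prop]
  constructor
  · rintro ⟨m', ⟨hm', hdigit⟩, hx'⟩
    obtain rfl : m' = m / q ^ (N - n) := by
      by_contra hne
      exact Set.disjoint_left.1 (disjoint_cell hq hm' ha hne) hx' hxa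
    exact hdigit
  · exact fun hdigit => ⟨_, ⟨ha, hdigit⟩, hxa⟩

lemma iInter_periodicCells (hq : 0 < q) {ι : Type*} [Fintype ι] (i : ι → ℕ) (j₀ : ι)
    (hpos : ∀ j, 0 < i j) (hle : ∀ j, i j ≤ i j₀) :
    ⋂ j, periodicCells p q (i j) =
      ⋃ m ∈ {m ∈ range (q ^ i j₀) | ∀ j, m / q ^ (i j₀ - i j) % q < p}, cell q (i j₀) m := by
  ext x
  simp only [Set.mem_iInter, Set.mem_iUnion, mem_filter, mem_range, exists_prop]
  constructor
  · intro hx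
    obtain ⟨m, ⟨hm, -⟩, hxm⟩ : ∃ m, (m < q ^ i j₀ ∧ m % q < p) ∧ x ∈ cell q (i j₀) m := by
      simpa [periodicCells] using hx j₀
    exact ⟨m, ⟨hm, fun j => (mem_periodicCells_iff hq (hpos j) (hle j) hm hxm).1 (hx j)⟩, hxm⟩
  · rintro ⟨m, ⟨hm, hdigits⟩, hxm⟩ j
    exact (mem_periodicCells_iff hq (hpos j) (hle j) hm hxm).2 (hdigits j)

lemma volume_iInter_periodicCells (hpq : p ≤ q) (hq : 0 < q) {ι : Type*} [Fintype ι]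
    (i : ι → ℕ) (hi : Function.Injective i) (j₀ : ι) (hpos : ∀ j, 0 < i j)
    (hle : ∀ j, i j ≤ i j₀) :
    volume (⋂ j, periodicCells p q (i j)) =
      (p : ℝ≥0∞) ^ Fintype.card ι / ((q : ℝ≥0∞) ^ Fintype.card ι * i j₀) := by
  set N := i j₀
  set c := Fintype.card ι
  set K := univ.image fun j => N - i j
  have hK : K ⊆ range N := by
    intro k hk
    obtain ⟨j, -, rfl⟩ := mem_image.1 hk
    exact mem_range.2 (Nat.sub_lt (hpos j₀) (hpos j))
  have hcard : #K = c :=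
    card_image_of_injective _ fun a b hab => hi (by have := hle a; have := hle b; omega)
  have hcN : c ≤ N := hcard ▸ (card_le_card hK).trans (card_range N).le
  have hdigits : {m ∈ range (q ^ N) | ∀ j, m / q ^ (N - i j) % q < p} =
      {m ∈ range (q ^ N) | ∀ k ∈ K, m / q ^ k % q < p} :=
    filter_congr fun m _ => by simp [K]
  rw [iInter_periodicCells hq i j₀ hpos hle, hdigits,
    volume_biUnion_cell hq (hpos j₀) (filter_subset _ _), card_filter_digit_lt hpq hK, hcard]
  have hqc : (q : ℝ≥0∞) ^ (N - c) ≠ 0 := pow_ne_zero _ (by exact_mod_cast hq.ne')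
  have hqt : (q : ℝ≥0∞) ^ (N - c) ≠ ⊤ := ENNReal.pow_ne_top (ENNReal.natCast_ne_top q)
  calc (((p ^ c * q ^ (N - c) : ℕ) : ℝ≥0∞)) / (N * q ^ N)
      = p ^ c * q ^ (N - c) / ((q ^ c * N) * q ^ (N - c)) := by
        rw [← Nat.add_sub_cancel' hcN, pow_add, Nat.add_sub_cancel_left]
        push_cast; ring_nf
    _ = p ^ c / (q ^ c * N) := ENNReal.mul_div_mul_right _ _ hqc hqt

lemma volume_limsup_periodicCells (hq : 0 < q) :
    volume (limsup (periodicCells p q) atTop) = 0 := by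
  have hbound : ∀ n : ℕ, 1 ≤ n → volume (limsup (periodicCells p q) atTop) ≤ (n : ℝ≥0∞)⁻¹ := by
    intro n hn
    have hsub : limsup (periodicCells p q) atTop ⊆ ⋃ m ∈ range (q ^ n), cell q n m := by
      rw [limsup_eq_iInf_iSup_of_nat]
      exact (iInf_le _ n).trans (iSup₂_le fun k hk => periodicCells_subset_biUnion_cell hq hn hk)
    have hqn : (q : ℝ≥0∞) ^ n ≠ 0 := pow_ne_zero _ (by exact_mod_cast hq.ne')
    have hqt : (q : ℝ≥0∞) ^ n ≠ ⊤ := ENNReal.pow_ne_top (ENNReal.natCast_ne_top q)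
    calc volume (limsup (periodicCells p q) atTop) ≤ volume (⋃ m ∈ range (q ^ n), cell q n m) :=
          measure_mono hsub
      _ = (n : ℝ≥0∞)⁻¹ := by
        rw [volume_biUnion_cell hq hn subset_rfl, card_range, ← one_div,
          ← one_mul ((q ^ n : ℕ) : ℝ≥0∞), Nat.cast_pow, ENNReal.mul_div_mul_right _ _ hqn hqt]
  exact le_antisymm (ge_of_tendsto ENNReal.tendsto_inv_nat_nhds_zero
    ((eventually_ge_atTop 1).mono hbound)) zero_le

end NestedCells

open NestedCells

theorem stmt_7 (p q : ℕ) (hp : 0 < p) (hpq : p ≤ q) :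
    ∃ G : ℕ → Set ℝ,
      (∀ i, MeasurableSet (G i)) ∧ (∀ i, G i ⊆ Set.Icc 0 1) ∧
      (∀ i : ℕ, 0 < i → volume (G i) = (p : ℝ≥0∞) / ((q : ℝ≥0∞) * i)) ∧
      (∀ (n : ℕ) (i : Fin (n + 1) → ℕ), StrictMono i → 0 < i 0 →
        volume (⋂ j, G (i j)) =
          (p : ℝ≥0∞) ^ (n + 1) / ((q : ℝ≥0∞) ^ (n + 1) * (i (Fin.last n)))) ∧
      volume (limsup G atTop) = 0 := by
  have hq : 0 < q := hp.trans_le hpq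
  refine ⟨periodicCells p q, measurableSet_periodicCells p q, periodicCells_subset_Icc hq,
    fun i hi => ?_, fun n i hi h0 => ?_, volume_limsup_periodicCells hq⟩
  · simpa [Set.iInter_const] using volume_iInter_periodicCells hpq hq (fun _ : Unit => i)
      (Function.injective_of_subsingleton _) () (fun _ => hi) (fun _ => le_rfl)
  · simpa using volume_iInter_periodicCells hpq hq i hi.injective (Fin.last n)
      (fun j => h0.trans_le (hi.monotone (Fin.zero_le j))) (fun j => hi.monotone (Fin.le_last j))
end

section
/- Let (Ω, μ) be a probability space and (A_i)_{i∈ℕ} a sequence of measurable sets with Σ_{i=1}^∞ μ(A_i) = ∞. Then μ(limsup_{n→∞} A_n) ≥ limsup_{n→∞} (Σ_{s=1}^n μ(A_s))² / (Σ_{s,t=1}^n μ(A_s ∩ A_t)). -/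
open MeasureTheory Filter Finset
open scoped ENNReal Topology

/-!
Cauchy–Schwarz for `N = ∑_{s ∈ S} 1_{A s}` against the indicator of its support gives
`(∑_{s ∈ S} μ (A s))² ≤ (∑_{s,t ∈ S} μ (A s ∩ A t)) · μ (⋃_{s ∈ S} A s)`. Take `S = [m, n]`:
since the partial sums diverge, dropping the first terms changes `∑_{s ≤ n} μ (A s)` only by a
factor tending to `1`, while the double sum can only decrease. So the limsup of the ratios is at
most `μ (⋃_{i ≥ m} A i)` for every `m ≥ 1`, and these measures decrease to `μ (limsup A)`.
-/

section CauchySchwarz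

variable {Ω : Type*} [MeasurableSpace Ω] {μ : Measure Ω}

theorem sq_lintegral_le_lintegral_sq_mul_measure {f : Ω → ℝ≥0∞} (hf : AEMeasurable f μ)
    {U : Set Ω} (hU : MeasurableSet U) (hfU : ∀ ω ∉ U, f ω = 0) :
    (∫⁻ ω, f ω ∂μ) ^ 2 ≤ (∫⁻ ω, f ω ^ 2 ∂μ) * μ U := by
  have hf_eq : f * U.indicator 1 = f := by
    ext ω
    by_cases hω : ω ∈ U <;> simp [hω, hfU]
  have hind_sq : ∀ ω, U.indicator (1 : Ω → ℝ≥0∞) ω ^ (2 : ℝ) = U.indicator 1 ω := by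
    intro ω
    by_cases hω : ω ∈ U <;> simp [hω]
  have holder := ENNReal.lintegral_mul_le_Lp_mul_Lq μ Real.HolderConjugate.two_two hf
    (measurable_one.indicator hU).aemeasurable
  simp only [hf_eq, hind_sq, lintegral_indicator_one hU, ENNReal.rpow_two] at holder
  rwa [← ENNReal.mul_rpow_of_nonneg _ _ (by norm_num), one_div,
    ENNReal.le_rpow_inv_iff (by norm_num), ENNReal.rpow_two] at holder

theorem sq_sum_measure_le_sum_measure_inter_mul_measure_biUnion {ι : Type*} {A : ι → Set Ω}
    (hA : ∀ i, MeasurableSet (A i)) (s : Finset ι) :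
    (∑ i ∈ s, μ (A i)) ^ 2 ≤ (∑ i ∈ s, ∑ j ∈ s, μ (A i ∩ A j)) * μ (⋃ i ∈ s, A i) := by
  set N : Ω → ℝ≥0∞ := fun ω => ∑ i ∈ s, (A i).indicator 1 ω
  have hind : ∀ i j, Measurable ((A i ∩ A j).indicator (1 : Ω → ℝ≥0∞)) :=
    fun i j => measurable_one.indicator ((hA i).inter (hA j))
  have hN : Measurable N := Finset.measurable_sum s fun i _ => measurable_one.indicator (hA i)
  have hN_int : ∫⁻ ω, N ω ∂μ = ∑ i ∈ s, μ (A i) := by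
    rw [lintegral_finsetSum s fun i _ => measurable_one.indicator (hA i)]
    simp only [lintegral_indicator_one (hA _)]
  have hN_sq_int : ∫⁻ ω, N ω ^ 2 ∂μ = ∑ i ∈ s, ∑ j ∈ s, μ (A i ∩ A j) := by
    calc ∫⁻ ω, N ω ^ 2 ∂μ = ∫⁻ ω, ∑ i ∈ s, ∑ j ∈ s, (A i ∩ A j).indicator 1 ω ∂μ := by
          simp only [N, sq, sum_mul_sum, Set.inter_indicator_one, Pi.mul_apply]
      _ = ∑ i ∈ s, ∑ j ∈ s, μ (A i ∩ A j) := by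
          rw [lintegral_finsetSum s fun i _ => Finset.measurable_sum s fun j _ => hind i j]
          simp only [lintegral_finsetSum s fun j _ => hind _ j,
            lintegral_indicator_one ((hA _).inter (hA _))]
  have hN_supp : ∀ ω ∉ ⋃ i ∈ s, A i, N ω = 0 := by
    intro ω hω
    simp only [Set.mem_iUnion, not_exists] at hω
    exact sum_eq_zero fun i hi => Set.indicator_of_notMem (hω i hi) _
  simpa only [hN_int, hN_sq_int] using sq_lintegral_le_lintegral_sq_mul_measure (μ := μ)
    hN.aemeasurable (s.measurableSet_biUnion fun i _ => hA i) hN_supp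

end CauchySchwarz

theorem sum_Icc_le_sum_Icc_add_sum_Icc {M : Type*} [AddCommMonoid M] [PartialOrder M]
    [CanonicallyOrderedAdd M] (u : ℕ → M) (k m n : ℕ) :
    ∑ i ∈ Icc k n, u i ≤ ∑ i ∈ Icc k m, u i + ∑ i ∈ Icc m n, u i := by
  refine (sum_le_sum_of_subset fun i hi => ?_).trans (le_self_add.trans sum_union_inter.le)
  simp only [mem_union, mem_Icc] at hi ⊢
  omega

theorem eventually_mul_sum_Icc_le_sum_Icc {u : ℕ → ℝ≥0∞} (hu : ∀ i, u i ≠ ∞) {k : ℕ}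
    (hdiv : Tendsto (fun n => ∑ i ∈ Icc k n, u i) atTop (𝓝 ∞)) {b : ℝ≥0∞} (hb : b < 1)
    (m : ℕ) : ∀ᶠ n in atTop, b * ∑ i ∈ Icc k n, u i ≤ ∑ i ∈ Icc m n, u i := by
  set C := ∑ i ∈ Icc k m, u i
  have hC : C ≠ ∞ := ENNReal.sum_ne_top.2 fun i _ => hu i
  have hdiv' : Tendsto (fun n => (1 - b) * ∑ i ∈ Icc k n, u i) atTop (𝓝 ∞) := by
    have := ENNReal.Tendsto.const_mul hdiv
      (Or.inr (ENNReal.sub_ne_top ENNReal.one_ne_top (b := b)))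
    rwa [ENNReal.mul_top (tsub_pos_of_lt hb).ne'] at this
  filter_upwards [hdiv'.eventually (eventually_ge_nhds hC.lt_top)] with n hn
  refine (ENNReal.add_le_add_iff_right hC).1 ?_
  calc b * ∑ i ∈ Icc k n, u i + C ≤ b * ∑ i ∈ Icc k n, u i + (1 - b) * ∑ i ∈ Icc k n, u i := by
        gcongr
    _ = ∑ i ∈ Icc k n, u i := by rw [← add_mul, add_tsub_cancel_of_le hb.le, one_mul]
    _ ≤ ∑ i ∈ Icc m n, u i + C := by
        rw [add_comm]
        exact sum_Icc_le_sum_Icc_add_sum_Icc u k m n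

section KochenStone

variable {Ω ι : Type*} [MeasurableSpace Ω] {μ : Measure Ω}

theorem mul_sq_sum_div_le_measure_biUnion {A : ι → Set Ω} (hA : ∀ i, MeasurableSet (A i))
    {s t : Finset ι} (hst : s ⊆ t) {b : ℝ≥0∞}
    (hb : b * ∑ i ∈ t, μ (A i) ≤ ∑ i ∈ s, μ (A i)) :
    b ^ 2 * ((∑ i ∈ t, μ (A i)) ^ 2 / ∑ i ∈ t, ∑ j ∈ t, μ (A i ∩ A j)) ≤
      μ (⋃ i ∈ s, A i) := by
  have hG : ∑ i ∈ s, ∑ j ∈ s, μ (A i ∩ A j) ≤ ∑ i ∈ t, ∑ j ∈ t, μ (A i ∩ A j) :=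
    (sum_le_sum fun i _ => sum_le_sum_of_subset hst).trans (sum_le_sum_of_subset hst)
  calc b ^ 2 * ((∑ i ∈ t, μ (A i)) ^ 2 / ∑ i ∈ t, ∑ j ∈ t, μ (A i ∩ A j))
      = (b * ∑ i ∈ t, μ (A i)) ^ 2 / ∑ i ∈ t, ∑ j ∈ t, μ (A i ∩ A j) := by
        rw [mul_pow, mul_div_assoc]
    _ ≤ (∑ i ∈ s, μ (A i)) ^ 2 / ∑ i ∈ s, ∑ j ∈ s, μ (A i ∩ A j) := by gcongr
    _ ≤ μ (⋃ i ∈ s, A i) := ENNReal.div_le_of_le_mul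
        (sq_sum_measure_le_sum_measure_inter_mul_measure_biUnion hA s |>.trans_eq (mul_comm _ _))

theorem limsup_sq_sum_div_le_measure_biUnion_ge [IsFiniteMeasure μ] {A : ℕ → Set Ω}
    (hA : ∀ i, MeasurableSet (A i))
    (hdiv : Tendsto (fun n => ∑ i ∈ Icc 1 n, μ (A i)) atTop (𝓝 ∞)) {m : ℕ} (hm : 1 ≤ m) :
    limsup (fun n => (∑ s ∈ Icc 1 n, μ (A s)) ^ 2 /
        ∑ s ∈ Icc 1 n, ∑ t ∈ Icc 1 n, μ (A s ∩ A t)) atTop ≤ μ (⋃ i ≥ m, A i) := by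
  refine ENNReal.le_of_forall_lt_one_mul_le fun a ha => ?_
  set b := a ^ (2⁻¹ : ℝ)
  have hb : b < 1 := ENNReal.rpow_lt_one ha (by norm_num)
  have hab : b ^ 2 = a := by
    rw [← ENNReal.rpow_two, ← ENNReal.rpow_mul, inv_mul_cancel₀ two_ne_zero, ENNReal.rpow_one]
  rw [← ENNReal.limsup_const_mul_of_ne_top (ha.trans ENNReal.one_lt_top).ne, ← hab]
  refine limsup_le_of_le (by isBoundedDefault) ?_
  filter_upwards [eventually_mul_sum_Icc_le_sum_Icc (fun i => measure_ne_top μ (A i)) hdiv hb m]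
    with n hn
  calc _ ≤ μ (⋃ i ∈ Icc m n, A i) :=
        mul_sq_sum_div_le_measure_biUnion hA (Icc_subset_Icc hm le_rfl) hn
    _ ≤ μ (⋃ i ≥ m, A i) := measure_mono <| Set.biUnion_mono (fun i hi => (mem_Icc.1 hi).1)
        fun _ _ => le_rfl

theorem tendsto_measure_biUnion_ge_limsup [IsFiniteMeasure μ] {A : ℕ → Set Ω}
    (hA : ∀ i, MeasurableSet (A i)) :
    Tendsto (fun m => μ (⋃ i ≥ m, A i)) atTop (𝓝 (μ (limsup A atTop))) := by
  rw [limsup_eq_iInf_iSup_of_nat]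
  exact tendsto_measure_iInter_atTop
    (fun m => (MeasurableSet.biUnion (Set.to_countable _) fun i _ => hA i).nullMeasurableSet)
    (fun m n hmn => Set.biUnion_subset_biUnion_left fun i hi => hmn.trans hi)
    ⟨0, measure_ne_top μ _⟩

end KochenStone

theorem stmt_9 {Ω : Type*} [MeasurableSpace Ω] (μ : Measure Ω)
    [IsProbabilityMeasure μ]
    (A : ℕ → Set Ω) (hA : ∀ i, MeasurableSet (A i))
    (hdiv : ∑' i : ℕ, μ (A (i + 1)) = ⊤) :
    limsup (fun n =>
        (∑ s ∈ Finset.Icc 1 n, μ (A s)) ^ 2 /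
          ∑ s ∈ Finset.Icc 1 n, ∑ t ∈ Finset.Icc 1 n, μ (A s ∩ A t)) atTop ≤
      μ (limsup A atTop) := by
  have hpartial : Tendsto (fun n => ∑ i ∈ Icc 1 n, μ (A i)) atTop (𝓝 ∞) := by
    have hIcc : ∀ n, ∑ i ∈ Icc 1 n, μ (A i) = ∑ i ∈ range n, μ (A (i + 1)) := fun n => by
      rw [← Ico_add_one_right_eq_Icc, sum_Ico_eq_sum_range]
      simp only [add_comm, add_tsub_cancel_right]
    simpa only [hIcc, hdiv] using ENNReal.tendsto_nat_tsum fun i => μ (A (i + 1))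
  refine ge_of_tendsto (tendsto_measure_biUnion_ge_limsup hA) ?_
  filter_upwards [eventually_ge_atTop 1] with m hm
  exact limsup_sq_sum_div_le_measure_biUnion_ge hA hpartial hm
end

section
/- Let (Ω, μ) be a probability space and (A_i)_{i∈ℕ} a sequence of pairwise independent measurable sets (μ(A_i ∩ A_j) = μ(A_i)μ(A_j) for i ≠ j) with Σ_{i=1}^∞ μ(A_i) = ∞. Then μ(limsup_{i→∞} A_i) = 1. -/
/-!
For `f = ∑ i ∈ s, 𝟙_{A i}`, Cauchy–Schwarz on the union `U` of the `A i` (the Chung–Erdős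
inequality) gives `T² ≤ μ U * ∑ i ∈ s, ∑ j ∈ s, μ (A i ∩ A j)` with `T = ∑ i ∈ s, μ (A i)`, and
pairwise independence bounds the double sum by `T² + T`. Hence `μ (⋃ i, A i) ≥ T / (T + 1)`, which
tends to `1` when the series diverges. Every tail of a divergent series diverges, so every tail
union has full measure, and so does their countable intersection `limsup A atTop`.
-/

open MeasureTheory Filter Set
open scoped ENNReal

theorem ENNReal.one_le_add_inv_of_sq_le {a t : ℝ≥0∞} (ha : a ≤ 1) (ht : t ≠ ∞)
    (h : t ^ 2 ≤ a * (t ^ 2 + t)) : 1 ≤ a + t⁻¹ := by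
  rcases eq_or_ne t 0 with rfl | ht0
  · simp
  have ht2 : t ^ 2 ≠ 0 := pow_ne_zero 2 ht0
  refine (ENNReal.mul_le_mul_iff_left ht2 (ENNReal.pow_ne_top ht)).1 ?_
  calc 1 * t ^ 2 ≤ a * (t ^ 2 + t) := by rwa [one_mul]
    _ ≤ a * t ^ 2 + t := by rw [mul_add]; gcongr; exact mul_le_of_le_one_left' ha
    _ = (a + t⁻¹) * t ^ 2 := by
        rw [add_mul, sq, ← mul_assoc t⁻¹, ENNReal.inv_mul_cancel ht0 ht, one_mul]

theorem ENNReal.tsum_nat_add_eq_top {f : ℕ → ℝ≥0∞} (hf : ∑' i, f i = ∞) (hf_ne : ∀ i, f i ≠ ∞)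
    (n : ℕ) : ∑' i, f (i + n) = ∞ := by
  induction n with
  | zero => simpa using hf
  | succ n ih =>
    simpa only [add_right_comm _ 1 n, add_assoc] using ENNReal.tsum_add_one_eq_top ih (hf_ne _)

section

variable {Ω : Type*} [MeasurableSpace Ω] {μ : Measure Ω}

theorem lintegral_sq_le_measure_mul_lintegral_sq {f : Ω → ℝ≥0∞} (hf : AEMeasurable f μ)
    {U : Set Ω} (hU : MeasurableSet U) (hfU : f.support ⊆ U) :
    (∫⁻ ω, f ω ∂μ) ^ 2 ≤ μ U * ∫⁻ ω, f ω ^ 2 ∂μ := by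
  have hf_eq : f * U.indicator 1 = f := by
    ext ω
    by_cases hω : ω ∈ U
    · simp [hω]
    · simp [hω, Function.notMem_support.1 (fun h => hω (hfU h))]
  have hind : ∀ ω, U.indicator (1 : Ω → ℝ≥0∞) ω ^ (2 : ℝ) = U.indicator 1 ω := by
    intro ω; by_cases hω : ω ∈ U <;> simp [hω]
  have hholder := ENNReal.lintegral_mul_le_Lp_mul_Lq μ Real.HolderConjugate.two_two hf
    (measurable_one.indicator hU).aemeasurable
  rw [hf_eq] at hholder
  simp only [hind, lintegral_indicator_one hU, ENNReal.rpow_two] at hholder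
  calc (∫⁻ ω, f ω ∂μ) ^ 2
      ≤ ((∫⁻ ω, f ω ^ 2 ∂μ) ^ (1 / 2 : ℝ) * μ U ^ (1 / 2 : ℝ)) ^ 2 := by gcongr
    _ = μ U * ∫⁻ ω, f ω ^ 2 ∂μ := by
      rw [mul_pow, ← ENNReal.rpow_two, ← ENNReal.rpow_two, ← ENNReal.rpow_mul,
        ← ENNReal.rpow_mul]
      norm_num [mul_comm]

theorem lintegral_sum_indicator_one {ι : Type*} {B : ι → Set Ω} (hB : ∀ i, MeasurableSet (B i))
    (s : Finset ι) : ∫⁻ ω, ∑ i ∈ s, (B i).indicator 1 ω ∂μ = ∑ i ∈ s, μ (B i) := by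
  rw [lintegral_finsetSum s fun i _ => measurable_one.indicator (hB i)]
  exact Finset.sum_congr rfl fun i _ => lintegral_indicator_one (hB i)

theorem sq_sum_measure_le_measure_biUnion_mul {ι : Type*} {A : ι → Set Ω}
    (hA : ∀ i, MeasurableSet (A i)) (s : Finset ι) :
    (∑ i ∈ s, μ (A i)) ^ 2 ≤ μ (⋃ i ∈ s, A i) * ∑ i ∈ s, ∑ j ∈ s, μ (A i ∩ A j) := by
  let f : Ω → ℝ≥0∞ := fun ω => ∑ i ∈ s, (A i).indicator 1 ω
  have hf_support : f.support ⊆ ⋃ i ∈ s, A i := by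
    intro ω hω
    obtain ⟨i, hi, hωi⟩ := Finset.exists_ne_zero_of_sum_ne_zero hω
    exact mem_biUnion hi (mem_of_indicator_ne_zero hωi)
  have hf_sq : ∀ ω, f ω ^ 2 = ∑ i ∈ s, ∑ j ∈ s, (A i ∩ A j).indicator 1 ω := by
    intro ω
    simp only [f, sq, Finset.sum_mul_sum, inter_indicator_one]
    rfl
  have hf_int : ∫⁻ ω, f ω ∂μ = ∑ i ∈ s, μ (A i) := lintegral_sum_indicator_one hA s
  have hf_sq_int : ∫⁻ ω, f ω ^ 2 ∂μ = ∑ i ∈ s, ∑ j ∈ s, μ (A i ∩ A j) := by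
    simp_rw [hf_sq]
    rw [lintegral_finsetSum _ fun i _ => Finset.measurable_sum _ fun j _ =>
      measurable_one.indicator ((hA i).inter (hA j))]
    exact Finset.sum_congr rfl fun i _ =>
      lintegral_sum_indicator_one (fun j => (hA i).inter (hA j)) s
  rw [← hf_int, ← hf_sq_int]
  exact lintegral_sq_le_measure_mul_lintegral_sq
    (Finset.measurable_sum _ fun i _ => measurable_one.indicator (hA i)).aemeasurable
    (Finset.measurableSet_biUnion s fun i _ => hA i) hf_support

theorem sum_sum_measure_inter_le_of_pairwise {ι : Type*} {A : ι → Set Ω}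
    (hindep : Pairwise fun i j => μ (A i ∩ A j) = μ (A i) * μ (A j)) (s : Finset ι) :
    ∑ i ∈ s, ∑ j ∈ s, μ (A i ∩ A j) ≤ (∑ i ∈ s, μ (A i)) ^ 2 + ∑ i ∈ s, μ (A i) := by
  classical
  have hterm : ∀ i j, μ (A i ∩ A j) ≤ μ (A i) * μ (A j) + if i = j then μ (A i) else 0 := by
    intro i j
    rcases eq_or_ne i j with rfl | hij
    · simp
    · simp [hindep hij, hij]
  calc ∑ i ∈ s, ∑ j ∈ s, μ (A i ∩ A j)
      ≤ ∑ i ∈ s, ∑ j ∈ s, (μ (A i) * μ (A j) + if i = j then μ (A i) else 0) :=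
        Finset.sum_le_sum fun i _ => Finset.sum_le_sum fun j _ => hterm i j
    _ = (∑ i ∈ s, μ (A i)) ^ 2 + ∑ i ∈ s, μ (A i) := by
        simp [Finset.sum_add_distrib, sq, Finset.sum_mul_sum]

theorem measure_iUnion_eq_one_of_pairwise_indep {ι : Type*} [IsProbabilityMeasure μ]
    {A : ι → Set Ω} (hA : ∀ i, MeasurableSet (A i))
    (hindep : Pairwise fun i j => μ (A i ∩ A j) = μ (A i) * μ (A j))
    (hdiv : ∑' i, μ (A i) = ∞) : μ (⋃ i, A i) = 1 := by
  refine le_antisymm prob_le_one ?_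
  have key (s : Finset ι) : 1 ≤ μ (⋃ i, A i) + (∑ i ∈ s, μ (A i))⁻¹ := by
    refine ENNReal.one_le_add_inv_of_sq_le prob_le_one
      (ENNReal.sum_ne_top.2 fun i _ => measure_ne_top μ _) ?_
    calc (∑ i ∈ s, μ (A i)) ^ 2 ≤ μ (⋃ i ∈ s, A i) * ∑ i ∈ s, ∑ j ∈ s, μ (A i ∩ A j) :=
          sq_sum_measure_le_measure_biUnion_mul hA s
      _ ≤ μ (⋃ i, A i) * ((∑ i ∈ s, μ (A i)) ^ 2 + ∑ i ∈ s, μ (A i)) :=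
          mul_le_mul' (measure_mono (iUnion₂_subset fun i _ => subset_iUnion A i))
            (sum_sum_measure_inter_le_of_pairwise hindep s)
  calc 1 ≤ ⨅ s : Finset ι, μ (⋃ i, A i) + (∑ i ∈ s, μ (A i))⁻¹ := le_iInf key
    _ = μ (⋃ i, A i) + (∑' i, μ (A i))⁻¹ := by
        rw [ENNReal.tsum_eq_iSup_sum, ENNReal.inv_iSup, ENNReal.add_iInf]
    _ = μ (⋃ i, A i) := by rw [hdiv, ENNReal.inv_top, add_zero]

end

theorem stmt_10 {Ω : Type*} [MeasurableSpace Ω] (μ : Measure Ω)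
    [IsProbabilityMeasure μ]
    (A : ℕ → Set Ω) (hA : ∀ i, MeasurableSet (A i))
    (hindep : ∀ i j, i ≠ j → μ (A i ∩ A j) = μ (A i) * μ (A j))
    (hdiv : ∑' i : ℕ, μ (A i) = ⊤) :
    μ (limsup A atTop) = 1 := by
  have htail (n : ℕ) : μ (⋃ i, A (i + n)) = 1 :=
    measure_iUnion_eq_one_of_pairwise_indep (fun i => hA (i + n))
      (fun i j hij => hindep _ _ ((add_left_injective n).ne hij))
      (ENNReal.tsum_nat_add_eq_top hdiv (fun i => measure_ne_top μ _) n)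
  have hmeas (n : ℕ) : MeasurableSet (⋃ i, A (i + n)) := .iUnion fun i => hA (i + n)
  simp only [limsup_eq_iInf_iSup_of_nat', iInf_eq_iInter, iSup_eq_iUnion]
  rw [← mem_ae_iff_prob_eq_one (.iInter hmeas)]
  exact countable_iInter_mem.2 fun n => (mem_ae_iff_prob_eq_one (hmeas n)).2 (htail n)
end

section
/- Let λ be Lebesgue measure on [0,1], let m, k ∈ ℕ, and let A ⊆ [0,1] be a finite union of dyadic intervals of length 2^{-km}. Let E ⊆ [0,1] be the set obtained by taking a Borel set S ⊆ [0,1], scaling it by 2^{-km}, and placing a translated copy into each dyadic interval of length 2^{-km} (i.e., E = ⋃_{j=0}^{2^{km}−1} (j·2^{-km} + 2^{-km}·S)). Then λ(E ∩ A) = λ(E)·λ(A). -/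
/-!
Each scaled copy of `S` lies in its own grid cell, and distinct cells meet only in null sets, so
up to a null set `E ∩ A` is the union of the copies sitting in the cells of `A`. A copy has measure
`2^{-km} λ(S)`, hence `λ(E ∩ A) = #t · 2^{-km} λ(S) = λ(A) λ(S)`, while
`λ(E) = 2^{km} · 2^{-km} λ(S) = λ(S)`.
-/

open MeasureTheory Set Pointwise ENNReal

section AEDisjointCells

variable {α ι : Type*} [MeasurableSpace α] {μ : Measure α} [DecidableEq ι]

theorem biUnion_inter_biUnion_ae_eq_of_subset {P I : ι → Set α} (hPI : ∀ j, P j ⊆ I j)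
    (hI : Pairwise (Function.onFun (AEDisjoint μ) I)) (s t : Finset ι) :
    ((⋃ i ∈ s, P i) ∩ ⋃ j ∈ t, I j : Set α) =ᵐ[μ] ⋃ j ∈ s ∩ t, P j := by
  refine Filter.EventuallyLE.antisymm ?_ (LE.le.eventuallyLE ?_)
  · have hoff : ∀ᵐ x ∂μ, ∀ i ∈ s, ∀ j ∈ t, i ≠ j → x ∉ I i ∩ I j := by
      simp only [Filter.eventually_all_finset, Filter.eventually_imp_distrib_left]
      exact fun i _ j _ hij => measure_eq_zero_iff_ae_notMem.1 (hI hij)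
    filter_upwards [hoff] with x hx ⟨hxP, hxI⟩
    obtain ⟨i, hi, hxi⟩ := mem_iUnion₂.1 hxP
    obtain ⟨j, hj, hxj⟩ := mem_iUnion₂.1 hxI
    obtain rfl : i = j := by_contra fun hij => hx i hi j hj hij ⟨hPI i hxi, hxj⟩
    exact mem_iUnion₂.2 ⟨i, Finset.mem_inter.2 ⟨hi, hj⟩, hxi⟩
  · simp only [Finset.mem_inter, iUnion_subset_iff, and_imp]
    exact fun j hs ht => subset_inter (subset_biUnion_of_mem (u := P) hs)
      ((hPI j).trans (subset_biUnion_of_mem (u := I) ht))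

end AEDisjointCells

section Grid

def gridCell (ε : ℝ) (j : ℕ) : Set ℝ := Icc (j * ε) ((j + 1) * ε)

def gridCopy (ε : ℝ) (S : Set ℝ) (j : ℕ) : Set ℝ := (fun x => j * ε + ε * x) '' S

variable {ε : ℝ} {S : Set ℝ}

theorem volume_gridCell (j : ℕ) : volume (gridCell ε j) = ENNReal.ofReal ε := by
  rw [gridCell, Real.volume_Icc]
  ring_nf

theorem pairwise_aedisjoint_gridCell (hε : 0 ≤ ε) :
    Pairwise (Function.onFun (AEDisjoint volume) (gridCell ε)) := by
  refine (Std.Symm.pairwise_on _).2 fun i j hij =>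
    measure_mono_null ?_ (Real.volume_singleton (a := j * ε))
  rintro x ⟨⟨_, hxi⟩, hxj, _⟩
  have : ((i : ℝ) + 1) * ε ≤ j * ε := by gcongr; exact_mod_cast hij
  exact le_antisymm (by linarith) hxj

theorem gridCopy_eq_vadd_smul (j : ℕ) : gridCopy ε S j = ((j : ℝ) * ε) +ᵥ ε • S := by
  rw [gridCopy, ← image_smul, ← image_vadd, image_image]
  rfl

theorem gridCopy_subset_gridCell (hε : 0 ≤ ε) (hS : S ⊆ Icc 0 1) (j : ℕ) :
    gridCopy ε S j ⊆ gridCell ε j := by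
  rintro _ ⟨x, hx, rfl⟩
  obtain ⟨hx0, hx1⟩ := hS hx
  constructor <;> nlinarith

theorem measurableSet_gridCopy (hS : MeasurableSet S) (j : ℕ) :
    MeasurableSet (gridCopy ε S j) := by
  rw [gridCopy_eq_vadd_smul]
  exact (hS.const_smul₀ ε).const_vadd _

theorem volume_gridCopy (hε : 0 ≤ ε) (j : ℕ) :
    volume (gridCopy ε S j) = ENNReal.ofReal ε * volume S := by
  rw [gridCopy_eq_vadd_smul, measure_vadd, Measure.addHaar_smul_of_nonneg volume hε,
    Module.finrank_self, pow_one]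

theorem volume_biUnion_gridCell (hε : 0 ≤ ε) (s : Finset ℕ) :
    volume (⋃ j ∈ s, gridCell ε j) = s.card * ENNReal.ofReal ε := by
  rw [measure_biUnion_finset₀ ((pairwise_aedisjoint_gridCell hε).set_pairwise _)
    fun j _ => measurableSet_Icc.nullMeasurableSet]
  simp [volume_gridCell]

theorem volume_biUnion_gridCopy (hε : 0 ≤ ε) (hS : MeasurableSet S) (hSsub : S ⊆ Icc 0 1)
    (s : Finset ℕ) :
    volume (⋃ j ∈ s, gridCopy ε S j) = s.card * (ENNReal.ofReal ε * volume S) := by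
  have hdisj : Pairwise (Function.onFun (AEDisjoint volume) (gridCopy ε S)) :=
    (pairwise_aedisjoint_gridCell hε).mono fun i j h =>
      h.mono (gridCopy_subset_gridCell hε hSsub i) (gridCopy_subset_gridCell hε hSsub j)
  rw [measure_biUnion_finset₀ (hdisj.set_pairwise _)
    fun j _ => (measurableSet_gridCopy hS j).nullMeasurableSet]
  simp [volume_gridCopy hε]

end Grid

theorem stmt_12 (m k : ℕ) (S : Set ℝ) (hS : MeasurableSet S)
    (hSsub : S ⊆ Set.Icc 0 1)
    (A : Set ℝ) (t : Finset ℕ) (ht : ∀ j ∈ t, j < 2 ^ (k * m))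
    (hA : A = ⋃ j ∈ t,
      Set.Icc ((j : ℝ) * (2 : ℝ) ^ (-(k * m : ℤ))) (((j : ℝ) + 1) * (2 : ℝ) ^ (-(k * m : ℤ))))
    (E : Set ℝ)
    (hE : E = ⋃ j ∈ Finset.range (2 ^ (k * m)),
      (fun x : ℝ => (j : ℝ) * (2 : ℝ) ^ (-(k * m : ℤ)) + (2 : ℝ) ^ (-(k * m : ℤ)) * x) '' S) :
    volume (E ∩ A) = volume E * volume A := by
  set ε : ℝ := (2 : ℝ) ^ (-(k * m : ℤ))
  have hε : 0 ≤ ε := by positivity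
  change A = ⋃ j ∈ t, gridCell ε j at hA
  change E = ⋃ j ∈ Finset.range (2 ^ (k * m)), gridCopy ε S j at hE
  have hmesh : ((2 ^ (k * m) : ℕ) : ℝ≥0∞) * ENNReal.ofReal ε = 1 := by
    rw [← ENNReal.ofReal_natCast, ← ENNReal.ofReal_mul (by positivity), Nat.cast_pow,
      Nat.cast_ofNat, ← zpow_natCast, ← zpow_add₀ two_ne_zero]
    simp
  have hEA : (E ∩ A : Set ℝ) =ᵐ[volume] ⋃ j ∈ t, gridCopy ε S j := by
    have hts : Finset.range (2 ^ (k * m)) ∩ t = t :=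
      Finset.inter_eq_right.2 fun j hj => Finset.mem_range.2 (ht j hj)
    have := biUnion_inter_biUnion_ae_eq_of_subset (gridCopy_subset_gridCell hε hSsub)
      (pairwise_aedisjoint_gridCell hε) (Finset.range (2 ^ (k * m))) t
    rwa [hts, ← hE, ← hA] at this
  rw [measure_congr hEA, hE, hA, volume_biUnion_gridCopy hε hS hSsub,
    volume_biUnion_gridCopy hε hS hSsub, volume_biUnion_gridCell hε, Finset.card_range,
    ← mul_assoc ((2 ^ (k * m) : ℕ) : ℝ≥0∞), hmesh]
  ring
end

section
/- Let m ∈ ℕ. There exist positive reals c₁,…,c_m, c̃₁,…,c̃_m, δ > 0 and rationals ρ₁ > ρ₂ > ⋯ > ρ_m > 0 with ρ_j = p_j/q_j ≤ 1, such that for every 1 ≤ r ≤ m: if r is odd, then Σ_{j=1}^m c_j ρ_j^r ≥ Σ_{j=1}^m c̃_j ρ_j^r + δ, and if r is even, then Σ_{j=1}^m c_j ρ_j^r ≤ Σ_{j=1}^m c̃_j ρ_j^r. -/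
open Matrix Finset

theorem stmt_18 (m : ℕ) :
    ∃ (c ctilde : Fin m → ℝ) (δ : ℝ) (ρ : Fin m → ℚ),
      (∀ j, 0 < c j) ∧ (∀ j, 0 < ctilde j) ∧ 0 < δ ∧
      StrictAnti ρ ∧ (∀ j, 0 < ρ j) ∧ (∀ j, ρ j ≤ 1) ∧
      ∀ r : ℕ, 1 ≤ r → r ≤ m →
        (Odd r → ∑ j, ctilde j * (ρ j : ℝ) ^ r + δ ≤ ∑ j, c j * (ρ j : ℝ) ^ r) ∧
        (Even r → ∑ j, c j * (ρ j : ℝ) ^ r ≤ ∑ j, ctilde j * (ρ j : ℝ) ^ r) := by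
  set ρ : Fin m → ℚ := fun j => 1 / ((j : ℕ) + 1) with hρdef
  have hρpos : ∀ j, 0 < ρ j := by
    intro j
    simp only [hρdef]
    positivity
  have hρanti : StrictAnti ρ := by
    intro i j hij
    simp only [hρdef]
    apply one_div_lt_one_div_of_lt
    · positivity
    · have : (i : ℕ) < (j : ℕ) := hij
      exact_mod_cast Nat.succ_lt_succ this
  have hρle : ∀ j, ρ j ≤ 1 := by
    intro j
    simp only [hρdef]
    rw [div_le_one (by positivity)]
    have : (0:ℚ) ≤ (j : ℕ) := Nat.cast_nonneg _
    linarith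
  set ρℝ : Fin m → ℝ := fun j => ((ρ j : ℚ) : ℝ) with hρℝdef
  have hρℝpos : ∀ j, 0 < ρℝ j := fun j => by
    have := hρpos j
    simp only [hρℝdef]
    exact_mod_cast this
  have hρℝinj : Function.Injective ρℝ := by
    have : ρℝ = (fun q : ℚ => (q : ℝ)) ∘ ρ := rfl
    rw [this]
    exact Rat.cast_injective.comp hρanti.injective
  set A : Matrix (Fin m) (Fin m) ℝ := fun r j => ρℝ j ^ ((r : ℕ) + 1) with hAdef
  have hAfact : A = (Matrix.vandermonde ρℝ)ᵀ * Matrix.diagonal ρℝ := by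
    ext r j
    simp [hAdef, Matrix.mul_apply, Matrix.vandermonde, Matrix.diagonal,
      Finset.sum_ite_eq, pow_succ]
  have hdet : A.det ≠ 0 := by
    rw [hAfact, Matrix.det_mul, Matrix.det_transpose, Matrix.det_diagonal]
    apply mul_ne_zero
    · rw [Matrix.det_vandermonde_ne_zero_iff]
      exact hρℝinj
    · exact Finset.prod_ne_zero_iff.mpr fun j _ => (hρℝpos j).ne'
  set t : Fin m → ℝ := fun r => (-1 : ℝ) ^ (r : ℕ) with htdef
  set d : Fin m → ℝ := A⁻¹.mulVec t with hddef
  have hAd : A.mulVec d = t := by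
    rw [hddef, Matrix.mulVec_mulVec, Matrix.mul_nonsing_inv A (isUnit_iff_ne_zero.mpr hdet),
      Matrix.one_mulVec]
  have key : ∀ r : ℕ, 1 ≤ r → r ≤ m → ∑ j, d j * ρℝ j ^ r = (-1 : ℝ) ^ (r - 1) := by
    intro r h1 h2
    have hlt : r - 1 < m := by omega
    have := congrFun hAd ⟨r - 1, hlt⟩
    rw [Matrix.mulVec, dotProduct] at this
    simp only [hAdef, htdef] at this
    have hr : r - 1 + 1 = r := by omega
    rw [hr] at this
    rw [← this]
    exact Finset.sum_congr rfl fun j _ => mul_comm _ _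
  refine ⟨fun j => 1 + |d j| + d j, fun j => 1 + |d j|, 1, ρ, ?_, ?_, one_pos,
    hρanti, hρpos, hρle, ?_⟩
  · intro j
    have h1 := abs_nonneg (d j)
    have h2 := neg_abs_le (d j)
    show 0 < 1 + |d j| + d j
    linarith
  · intro j
    have h1 := abs_nonneg (d j)
    show 0 < 1 + |d j|
    linarith
  · intro r h1 h2
    beta_reduce
    have hsum : ∑ j, (1 + |d j| + d j) * (ρ j : ℝ) ^ r
        = ∑ j, (1 + |d j|) * (ρ j : ℝ) ^ r + (-1 : ℝ) ^ (r - 1) := by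
      rw [← key r h1 h2]
      rw [← Finset.sum_add_distrib]
      exact Finset.sum_congr rfl fun j _ => by ring
    constructor
    · intro hodd
      have he : Even (r - 1) := by
        rcases hodd with ⟨k, hk⟩
        exact ⟨k, by omega⟩
      rw [he.neg_one_pow] at hsum
      linarith
    · intro heven
      have ho : Odd (r - 1) := by
        rcases heven with ⟨k, hk⟩
        exact ⟨k - 1, by omega⟩
      rw [ho.neg_one_pow] at hsum
      linarith
end
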